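/- Let β ∈ [0,d] and let E ⊂ S^d with Hausdorff dimension strictly less than d - β. Then there exists f ∈ L¹(S^d) such that E ⊆ {y ∈ S^d : limsup_{r→1} |P[f](ry)|·(1-r)^β = +∞}. -/

import Mathlib

open Metric Set MeasureTheory Filter

/-- The Poisson kernel on the unit ball of `ℝ^{d+1}`. -/
noncomputable def poissonKernelBall (d : ℕ) (x ξ : EuclideanSpace ℝ (Fin (d + 1))) : ℝ :=
  (1 - ‖x‖ ^ 2) / ‖x - ξ‖ ^ (d + 1)

/-- The normalized surface measure on the unit sphere of `ℝ^{d+1}`. -/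
noncomputable def sphereMeasure (d : ℕ) :
    Measure (sphere (0 : EuclideanSpace ℝ (Fin (d + 1))) 1) :=
  ((volume : Measure (EuclideanSpace ℝ (Fin (d + 1)))).toSphere Set.univ)⁻¹ •
    (volume : Measure (EuclideanSpace ℝ (Fin (d + 1)))).toSphere

/-!
Since `dimH E < d - β`, the `(d - β)`-dimensional Hausdorff measure of `E` vanishes, so for every
`n` the set `E` is covered by caps `B(c, ρ)` with `ρ ≤ 1 / (n + 1)` and `∑ ρ ^ (d - β)` as small as
we like. Spread mass `n ρ ^ (d - β)` uniformly over each cap of the `n`-th cover; for small enough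
covers the total mass is finite, which gives `f ∈ L¹`. If `y` lies in a cap `B(c, ρ)` of the `n`-th
cover, then at `x = (1 - ρ) y` the Poisson kernel is at least `ρ / (3ρ) ^ (d + 1)` on that cap, so
`P[f](x) (1 - ‖x‖) ^ β ≥ n / 3 ^ (d + 1)`.
-/

open scoped ENNReal Topology

section Covering

variable {X : Type*} {s : ℝ} {E : Set X}

theorem exists_cover_tsum_ediam_rpow_lt [EMetricSpace X] [MeasurableSpace X] [BorelSpace X]
    (hs : 0 < s) (hE : μH[s] E = 0) {r ε : ℝ≥0∞} (hr : 0 < r) (hε : ε ≠ 0) :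
    ∃ t : ℕ → Set X, E ⊆ ⋃ n, t n ∧ (∀ n, ediam (t n) ≤ r) ∧ ∑' n, ediam (t n) ^ s < ε := by
  simp only [Measure.hausdorffMeasure_apply, ENNReal.iSup_eq_zero] at hE
  have hlt := pos_iff_ne_zero.2 hε
  rw [← hE r hr] at hlt
  simp only [iInf_lt_iff, exists_prop] at hlt
  obtain ⟨t, htE, htr, ht⟩ := hlt
  refine ⟨t, htE, htr, lt_of_le_of_lt (ENNReal.tsum_le_tsum fun n => ?_) ht⟩
  rcases (t n).eq_empty_or_nonempty with h | h
  · simp [h, hs]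
  · exact le_iSup_of_le h le_rfl

theorem hausdorffMeasure_eq_zero_of_dimH_lt_ofReal [EMetricSpace X] [MeasurableSpace X]
    [BorelSpace X] (hE : dimH E < ENNReal.ofReal s) : 0 < s ∧ μH[s] E = 0 := by
  have hs : 0 < s := ENNReal.ofReal_pos.1 (pos_of_gt hE)
  refine ⟨hs, ?_⟩
  simpa [Real.coe_toNNReal _ hs.le] using hausdorffMeasure_of_dimH_lt (d := s.toNNReal) hE

theorem exists_ball_cover_tsum_rpow_le [MetricSpace X] [MeasurableSpace X] [BorelSpace X]
    [Nonempty X] (hs : 0 < s) (hE : μH[s] E = 0) {δ : ℝ} (hδ : 0 < δ) {ε : ℝ≥0∞} (hε : ε ≠ 0) :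
    ∃ (c : ℕ → X) (ρ : ℕ → ℝ), (∀ n, ρ n ∈ Ioc 0 δ) ∧ E ⊆ ⋃ n, ball (c n) (ρ n) ∧
      ∑' n, ENNReal.ofReal (ρ n) ^ s ≤ ε := by
  classical
  have h2s : (2 : ℝ≥0∞) ^ s * 2 ≠ ⊤ := by finiteness
  set ε₀ := ε / (2 ^ s * 2)
  have hε₀ : ε₀ ≠ 0 := ENNReal.div_ne_zero.2 ⟨hε, h2s⟩
  obtain ⟨t, htE, htδ, ht⟩ :=
    exists_cover_tsum_ediam_rpow_lt hs hE (r := ENNReal.ofReal (δ / 2)) (by simp [hδ]) hε₀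
  obtain ⟨η, hη0, hη⟩ := ENNReal.exists_pos_sum_of_countable hε₀ ℕ
  -- `ediam (t n)` may vanish; the slack `ζ n` keeps the radii positive at a summable cost
  set ζ : ℕ → ℝ≥0∞ := fun n => min ((η n : ℝ≥0∞) ^ s⁻¹) (ENNReal.ofReal (δ / 2))
  have hζs : ∀ n, ζ n ^ s ≤ η n := fun n => by
    calc ζ n ^ s ≤ ((η n : ℝ≥0∞) ^ s⁻¹) ^ s := by gcongr; exact min_le_left _ _
      _ = η n := ENNReal.rpow_inv_rpow hs.ne' _
  have hR : ∀ n, ediam (t n) + ζ n ≤ ENNReal.ofReal δ := fun n => by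
    calc ediam (t n) + ζ n ≤ ENNReal.ofReal (δ / 2) + ENNReal.ofReal (δ / 2) :=
          add_le_add (htδ n) (min_le_right _ _)
      _ = ENNReal.ofReal δ := by
          rw [← ENNReal.ofReal_add (by positivity) (by positivity), add_halves]
  have hRtop : ∀ n, ediam (t n) + ζ n ≠ ⊤ := fun n =>
    ne_top_of_le_ne_top ENNReal.ofReal_ne_top (hR n)
  have hζ0 : ∀ n, 0 < ζ n := fun n =>
    lt_min (ENNReal.rpow_pos (by simpa using hη0 n) ENNReal.coe_ne_top) (by simp [hδ])
  refine ⟨fun n => if h : (t n).Nonempty then h.some else Classical.arbitrary X,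
    fun n => (ediam (t n) + ζ n).toReal, fun n => ⟨?_, ?_⟩, ?_, ?_⟩
  · exact ENNReal.toReal_pos ((hζ0 n).trans_le le_add_self).ne' (hRtop n)
  · exact ENNReal.toReal_le_of_le_ofReal hδ.le (hR n)
  · intro y hy
    obtain ⟨n, hyn⟩ := mem_iUnion.1 (htE hy)
    have hne : (t n).Nonempty := ⟨y, hyn⟩
    refine mem_iUnion.2 ⟨n, ?_⟩
    rw [mem_ball, ← edist_lt_ofReal]
    simp only [dif_pos hne, ENNReal.ofReal_toReal (hRtop n)]
    exact (edist_le_ediam_of_mem hyn hne.some_mem).trans_lt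
      (ENNReal.lt_add_right (ne_top_of_le_ne_top ENNReal.ofReal_ne_top (htδ n)) (hζ0 n).ne')
  · calc ∑' n, ENNReal.ofReal (ediam (t n) + ζ n).toReal ^ s
        = ∑' n, (ediam (t n) + ζ n) ^ s := by simp only [ENNReal.ofReal_toReal (hRtop _)]
      _ ≤ ∑' n, 2 ^ s * (ediam (t n) ^ s + ζ n ^ s) :=
          ENNReal.tsum_le_tsum fun n => ENNReal.add_rpow_le_two_rpow_mul_rpow_add_rpow _ _ hs.le
      _ ≤ 2 ^ s * (ε₀ + ε₀) := by
          rw [ENNReal.tsum_mul_left, ENNReal.tsum_add]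
          gcongr
          exact (ENNReal.tsum_le_tsum hζs).trans hη.le
      _ = ε := by rw [← two_mul, ← mul_assoc, ENNReal.mul_div_cancel (by positivity) h2s]

theorem exists_ball_covers_tsum_mul_rpow_ne_top [MetricSpace X] [MeasurableSpace X]
    [BorelSpace X] [Nonempty X] (hs : 0 < s) (hE : μH[s] E = 0)
    {δ : ℕ → ℝ} (hδ : ∀ n, 0 < δ n) {a : ℕ → ℝ≥0∞} (ha : ∀ n, a n ≠ ⊤) :
    ∃ (c : ℕ → ℕ → X) (ρ : ℕ → ℕ → ℝ), (∀ n i, ρ n i ∈ Ioc 0 (δ n)) ∧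
      (∀ n, E ⊆ ⋃ i, ball (c n i) (ρ n i)) ∧
      ∑' p : ℕ × ℕ, a p.1 * ENNReal.ofReal (ρ p.1 p.2) ^ s ≠ ⊤ := by
  obtain ⟨ε, hε0, hε⟩ := ENNReal.exists_pos_tsum_mul_lt_of_countable one_ne_zero a ha
  choose c ρ hρ hcover hsum using fun n =>
    exists_ball_cover_tsum_rpow_le hs hE (hδ n) (ENNReal.coe_ne_zero.2 (hε0 n).ne')
  refine ⟨c, ρ, hρ, hcover, ne_top_of_le_ne_top ENNReal.one_ne_top ?_⟩
  calc ∑' p : ℕ × ℕ, a p.1 * ENNReal.ofReal (ρ p.1 p.2) ^ s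
      = ∑' n, a n * ∑' i, ENNReal.ofReal (ρ n i) ^ s := by
        rw [ENNReal.tsum_prod (f := fun n i => a n * ENNReal.ofReal (ρ n i) ^ s)]
        simp only [ENNReal.tsum_mul_left]
    _ ≤ ∑' n, a n * ε n := ENNReal.tsum_le_tsum fun n => by gcongr; exact hsum n
    _ ≤ 1 := hε.le

end Covering

theorem exists_integrable_forall_le_setIntegral {α ι : Type*} [MeasurableSpace α] [Countable ι]
    {μ : Measure α} {B : ι → Set α} (hB : ∀ k, MeasurableSet (B k)) (hB0 : ∀ k, μ (B k) ≠ 0)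
    (hBtop : ∀ k, μ (B k) ≠ ⊤) {w : ι → ℝ≥0∞} (hw : ∑' k, w k ≠ ⊤) :
    ∃ f : α → ℝ, Integrable f μ ∧ 0 ≤ f ∧ ∀ k, (w k).toReal ≤ ∫ x in B k, f x ∂μ := by
  set F : α → ℝ≥0∞ := fun x => ∑' k, (B k).indicator (fun _ => w k / μ (B k)) x
  have hFm : Measurable F := Measurable.tsum fun k => measurable_const.indicator (hB k)
  have hF : ∫⁻ x, F x ∂μ = ∑' k, w k := by
    rw [lintegral_tsum fun k => (measurable_const.indicator (hB k)).aemeasurable]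
    simp only [lintegral_indicator_const (hB _), ENNReal.div_mul_cancel (hB0 _) (hBtop _)]
  have hFtop : ∫⁻ x, F x ∂μ ≠ ⊤ := hF ▸ hw
  refine ⟨fun x => (F x).toReal, integrable_toReal_of_lintegral_ne_top hFm.aemeasurable hFtop,
    fun x => ENNReal.toReal_nonneg, fun k => ?_⟩
  have hwF : w k ≤ ∫⁻ x in B k, F x ∂μ := by
    calc w k = ∫⁻ _ in B k, w k / μ (B k) ∂μ := by
          rw [setLIntegral_const, ENNReal.div_mul_cancel (hB0 k) (hBtop k)]
      _ ≤ ∫⁻ x in B k, F x ∂μ := setLIntegral_mono' (hB k) fun x hx => by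
          simpa [hx] using
            ENNReal.le_tsum (f := fun j => (B j).indicator (fun _ => w j / μ (B j)) x) k
  rw [integral_toReal hFm.aemeasurable (ae_restrict_of_ae (ae_lt_top hFm hFtop))]
  exact ENNReal.toReal_mono (ne_top_of_le_ne_top hFtop (setLIntegral_le_lintegral _ _)) hwF

theorem frequently_lt_of_forall_exists_Ico {g : ℝ → ℝ} {u : ℕ → ℝ} (hu : Tendsto u atTop atTop)
    (h : ∀ n : ℕ, ∃ r ∈ Ico (1 - 1 / ((n : ℝ) + 1)) 1, u n ≤ g r) (M : ℝ) :
    ∃ᶠ r in 𝓝[<] (1 : ℝ), M < g r := by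
  choose r hr hgr using h
  have hr_lim : Tendsto r atTop (𝓝[<] 1) := by
    refine tendsto_nhdsWithin_iff.2 ⟨?_, Eventually.of_forall fun n => (hr n).2⟩
    have hlow : Tendsto (fun n : ℕ => 1 - 1 / ((n : ℝ) + 1)) atTop (𝓝 1) := by
      simpa using (tendsto_const_nhds (x := (1 : ℝ))).sub tendsto_one_div_add_atTop_nhds_zero_nat
    exact tendsto_of_tendsto_of_tendsto_of_le_of_le hlow tendsto_const_nhds
      (fun n => (hr n).1) fun n => (hr n).2.le
  exact hr_lim.frequently
    ((hu.eventually_gt_atTop M).mono fun n hn => hn.trans_le (hgr n)).frequently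

section PoissonKernel

variable {d : ℕ}

local notation "ℝᵈ⁺¹" => EuclideanSpace ℝ (Fin (d + 1))

theorem one_sub_norm_le_norm_sub {x ξ : ℝᵈ⁺¹} (hξ : ‖ξ‖ = 1) : 1 - ‖x‖ ≤ ‖x - ξ‖ := by
  simpa [hξ, norm_sub_rev] using norm_sub_norm_le ξ x

theorem poissonKernelBall_nonneg {x : ℝᵈ⁺¹} (hx : ‖x‖ ≤ 1) (ξ : ℝᵈ⁺¹) :
    0 ≤ poissonKernelBall d x ξ := by
  unfold poissonKernelBall
  have : ‖x‖ ^ 2 ≤ 1 := pow_le_one₀ (norm_nonneg x) hx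
  positivity

theorem poissonKernelBall_le {x ξ : ℝᵈ⁺¹} (hx : ‖x‖ < 1) (hξ : ‖ξ‖ = 1) :
    poissonKernelBall d x ξ ≤ 1 / (1 - ‖x‖) ^ (d + 1) := by
  unfold poissonKernelBall
  exact div_le_div₀ zero_le_one (by nlinarith [sq_nonneg ‖x‖]) (pow_pos (by linarith) _)
    (pow_le_pow_left₀ (by linarith) (one_sub_norm_le_norm_sub hξ) _)

theorem div_le_poissonKernelBall {x ξ : ℝᵈ⁺¹} (hx : ‖x‖ < 1) (hξ : ‖ξ‖ = 1) {R : ℝ}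
    (hR : ‖x - ξ‖ ≤ R) : (1 - ‖x‖) / R ^ (d + 1) ≤ poissonKernelBall d x ξ := by
  unfold poissonKernelBall
  have hpos : 0 < ‖x - ξ‖ := (sub_pos.2 hx).trans_le (one_sub_norm_le_norm_sub hξ)
  gcongr
  · nlinarith [norm_nonneg x]
  · nlinarith [norm_nonneg x]

theorem measurable_poissonKernelBall (x : ℝᵈ⁺¹) : Measurable (poissonKernelBall d x) := by
  unfold poissonKernelBall
  fun_prop

local notation "𝕊ᵈ" => sphere (0 : ℝᵈ⁺¹) 1

theorem mul_setIntegral_ball_le_integral_poissonKernelBall_mul {μ : Measure 𝕊ᵈ} {f : 𝕊ᵈ → ℝ}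
    (hf : Integrable f μ) (hf0 : 0 ≤ f) {c y : 𝕊ᵈ} {ρ : ℝ} (hρ : 0 < ρ) (hρ1 : ρ ≤ 1)
    (hy : y ∈ ball c ρ) :
    ρ / (3 * ρ) ^ (d + 1) * ∫ ξ in ball c ρ, f ξ ∂μ ≤
      ∫ ξ, poissonKernelBall d ((1 - ρ) • (y : ℝᵈ⁺¹)) ξ * f ξ ∂μ := by
  set x := (1 - ρ) • (y : ℝᵈ⁺¹)
  have hnorm (ξ : 𝕊ᵈ) : ‖(ξ : ℝᵈ⁺¹)‖ = 1 := norm_eq_of_mem_sphere ξ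
  have hx : ‖x‖ = 1 - ρ := by rw [norm_smul, hnorm, mul_one, Real.norm_of_nonneg (by linarith)]
  have hx1 : ‖x‖ < 1 := by linarith
  have hK0 (ξ : 𝕊ᵈ) : 0 ≤ poissonKernelBall d x ξ := poissonKernelBall_nonneg hx1.le _
  have hint : Integrable (fun ξ : 𝕊ᵈ => poissonKernelBall d x ξ * f ξ) μ := by
    refine hf.bdd_mul (c := 1 / ρ ^ (d + 1))
      ((measurable_poissonKernelBall x).comp measurable_subtype_coe).aestronglyMeasurable
      (ae_of_all _ fun ξ => ?_)
    rw [Real.norm_of_nonneg (hK0 ξ)]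
    simpa [hx] using poissonKernelBall_le hx1 (hnorm ξ)
  have hK_ball : ∀ ξ ∈ ball c ρ, ρ / (3 * ρ) ^ (d + 1) ≤ poissonKernelBall d x ξ := by
    intro ξ hξ
    have hxy : ‖x - y‖ = ρ := by
      rw [show x - y = (-ρ) • (y : ℝᵈ⁺¹) by simp only [x]; module,
        norm_smul, hnorm, norm_neg, Real.norm_of_nonneg hρ.le, mul_one]
    have hxξ : ‖x - ξ‖ ≤ 3 * ρ := by
      calc ‖x - ξ‖ ≤ ‖x - y‖ + dist y ξ := norm_sub_le_norm_sub_add_norm_sub _ _ _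
        _ ≤ 3 * ρ := by linarith [dist_triangle_right y ξ c, mem_ball.1 hy, mem_ball.1 hξ]
    simpa [hx] using div_le_poissonKernelBall hx1 (hnorm ξ) hxξ
  calc ρ / (3 * ρ) ^ (d + 1) * ∫ ξ in ball c ρ, f ξ ∂μ
      = ∫ ξ in ball c ρ, ρ / (3 * ρ) ^ (d + 1) * f ξ ∂μ := (integral_const_mul _ _).symm
    _ ≤ ∫ ξ in ball c ρ, poissonKernelBall d x ξ * f ξ ∂μ :=
        setIntegral_mono_on (hf.integrableOn.const_mul _) hint.integrableOn measurableSet_ball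
          fun ξ hξ => mul_le_mul_of_nonneg_right (hK_ball ξ hξ) (hf0 ξ)
    _ ≤ ∫ ξ, poissonKernelBall d x ξ * f ξ ∂μ :=
        setIntegral_le_integral hint (ae_of_all _ fun ξ => mul_nonneg (hK0 ξ) (hf0 ξ))

instance : IsProbabilityMeasure (sphereMeasure d) :=
  haveI : NeZero (volume : Measure ℝᵈ⁺¹).toSphere := ⟨Measure.toSphere_ne_zero _⟩
  isProbabilityMeasureSMul

instance : (sphereMeasure d).IsOpenPosMeasure :=
  Measure.isOpenPosMeasure_smul _ (ENNReal.inv_ne_zero.2 (measure_ne_top _ _))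

end PoissonKernel

theorem div_mul_rpow_sub_mul_rpow {ρ : ℝ} (hρ : 0 < ρ) (d : ℕ) (a β : ℝ) :
    ρ / (3 * ρ) ^ (d + 1) * (a * ρ ^ ((d : ℝ) - β)) * ρ ^ β = a / 3 ^ (d + 1) := by
  have h : ρ ^ ((d : ℝ) - β) * ρ ^ β = ρ ^ d := by
    rw [← Real.rpow_add hρ, sub_add_cancel, Real.rpow_natCast]
  rw [mul_assoc, mul_assoc a, h]
  field_simp
  ring

theorem exists_integrable_of_dimH_lt_general (d : ℕ) (β : ℝ)
    (E : Set (sphere (0 : EuclideanSpace ℝ (Fin (d + 1))) 1))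
    (hE : dimH E < ENNReal.ofReal (d - β)) :
    ∃ f : sphere (0 : EuclideanSpace ℝ (Fin (d + 1))) 1 → ℝ,
      Integrable f (sphereMeasure d) ∧
      E ⊆ {y : sphere (0 : EuclideanSpace ℝ (Fin (d + 1))) 1 |
        ∀ M : ℝ, ∃ᶠ r in nhdsWithin (1 : ℝ) (Iio 1),
          M < |∫ ξ, poissonKernelBall d (r • (y : EuclideanSpace ℝ (Fin (d + 1)))) ξ * f ξ
                  ∂(sphereMeasure d)| * Real.rpow (1 - r) β} := by
  obtain ⟨hs, hE0⟩ := hausdorffMeasure_eq_zero_of_dimH_lt_ofReal hE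
  have := NormedSpace.sphere_nonempty_rclike ℝ (E := EuclideanSpace ℝ (Fin (d + 1))) zero_le_one
  obtain ⟨c, ρ, hρ, hcover, hw⟩ := exists_ball_covers_tsum_mul_rpow_ne_top hs hE0
    (δ := fun n => 1 / ((n : ℝ) + 1)) (fun n => by positivity) (a := fun n => n) (fun n => by simp)
  obtain ⟨f, hf, hf0, hmass⟩ := exists_integrable_forall_le_setIntegral (μ := sphereMeasure d)
    (B := fun p => ball (c p.1 p.2) (ρ p.1 p.2))
    (fun _ => measurableSet_ball) (fun p => (measure_ball_pos _ _ (hρ p.1 p.2).1).ne')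
    (fun _ => measure_ne_top _ _) hw
  refine ⟨f, hf, fun y hy M => frequently_lt_of_forall_exists_Ico
    (tendsto_natCast_atTop_atTop.atTop_div_const (by positivity : (0 : ℝ) < 3 ^ (d + 1))) ?_ M⟩
  intro n
  obtain ⟨i, hi⟩ := mem_iUnion.1 (hcover n hy)
  obtain ⟨hρ0, hρn⟩ := hρ n i
  have hρ1 : ρ n i ≤ 1 := hρn.trans (div_le_one_of_le₀ (by simp) (by positivity))
  refine ⟨1 - ρ n i, ⟨by linarith, by linarith⟩, ?_⟩
  have hP := (mul_setIntegral_ball_le_integral_poissonKernelBall_mul hf hf0 hρ0 hρ1 hi).trans'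
    (mul_le_mul_of_nonneg_left (hmass (n, i)) (by positivity))
  simp only [ENNReal.toReal_mul, ENNReal.toReal_natCast, ← ENNReal.toReal_rpow,
    ENNReal.toReal_ofReal hρ0.le] at hP
  calc (n : ℝ) / 3 ^ (d + 1)
      = ρ n i / (3 * ρ n i) ^ (d + 1) * (n * ρ n i ^ ((d : ℝ) - β)) * ρ n i ^ β :=
        (div_mul_rpow_sub_mul_rpow hρ0 _ _ _).symm
    _ ≤ |∫ ξ, poissonKernelBall d ((1 - ρ n i) • (y : EuclideanSpace ℝ (Fin (d + 1)))) ξ * f ξ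
          ∂(sphereMeasure d)| * ρ n i ^ β := by
        gcongr
        exact hP.trans (le_abs_self _)
    _ = _ := by simp [Real.rpow_eq_pow]

theorem exists_integrable_of_dimH_lt (d : ℕ) (β : ℝ) (hβ : β ∈ Icc (0 : ℝ) d)
    (E : Set (sphere (0 : EuclideanSpace ℝ (Fin (d + 1))) 1))
    (hE : dimH E < ENNReal.ofReal (d - β)) :
    ∃ f : sphere (0 : EuclideanSpace ℝ (Fin (d + 1))) 1 → ℝ,
      Integrable f (sphereMeasure d) ∧
      E ⊆ {y : sphere (0 : EuclideanSpace ℝ (Fin (d + 1))) 1 |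
        ∀ M : ℝ, ∃ᶠ r in nhdsWithin (1 : ℝ) (Iio 1),
          M < |∫ ξ, poissonKernelBall d (r • (y : EuclideanSpace ℝ (Fin (d + 1)))) ξ * f ξ
                  ∂(sphereMeasure d)| * Real.rpow (1 - r) β} :=
  exists_integrable_of_dimH_lt_general d β E hE
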